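/- Let W(1), W(2), ... be row-stochastic n×n matrices and suppose there exist h ∈ ℕ and p ∈ (0,1] and α ∈ (0,1] such that for every k the product W(k+h)···W(k+1) is scrambling with probability at least p (conditioned on the past), and every positive entry of each W(k) is at least α. Let x_{k+1} = W(k+1)x_k and v_k = max_i x_k^i - min_i x_k^i. Then E[v_{k+h} | F_k] ≤ (1 - p·α^h) v_k for all k. -/

import Mathlib

open MeasureTheory Filter

def IsStochastic {n : ℕ} (A : Matrix (Fin n) (Fin n) ℝ) : Prop :=
  (∀ i j, 0 ≤ A i j) ∧ ∀ i, ∑ j, A i j = 1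

noncomputable def tau {n : ℕ} (A : Matrix (Fin n) (Fin n) ℝ) : ℝ :=
  1 - ⨅ p : Fin n × Fin n, ∑ s, min (A p.1 s) (A p.2 s)

def Scrambling {n : ℕ} (A : Matrix (Fin n) (Fin n) ℝ) : Prop :=
  ∀ i j, ∃ s, 0 < A i s ∧ 0 < A j s

noncomputable def spread {n : ℕ} (x : Fin n → ℝ) : ℝ := (⨆ i, x i) - ⨅ i, x i

/-- Backward product `W(k+h) ⋯ W(k+1)` of a matrix sequence. -/
def backProd {n : ℕ} (W : ℕ → Matrix (Fin n) (Fin n) ℝ) (k : ℕ) : ℕ → Matrix (Fin n) (Fin n) ℝ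
  | 0 => 1
  | h + 1 => W (k + h + 1) * backProd W k h

/-!
For a stochastic matrix `A`, rows `i` and `j` share the mass `∑ₛ min (A i s) (A j s)`,
which cancels in `(A x) i - (A x) j`; hence `spread (A x) ≤ τ(A) · spread x` for
Dobrushin's coefficient `τ(A) = 1 - minᵢⱼ ∑ₛ min (A i s) (A j s) ≤ 1`. If `A` is
scrambling and its positive entries are at least `β`, any two rows share mass at least `β`,
so `τ(A) ≤ 1 - β`. The positive entries of `W(k+h) ⋯ W(k+1)` are at least `αʰ`, so
`v_{k+h} ≤ v_k - αʰ v_k 𝟙_S` with `S` the event that this product is scrambling.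
Conditioning on `F_k` and pulling out the `F_k`-measurable `v_k` gives
`E[v_{k+h} | F_k] ≤ v_k - αʰ v_k P(S | F_k) ≤ (1 - p αʰ) v_k`.
-/

open Matrix

theorem Matrix.mul_apply_ge_of_pos {l m o : Type*} [Fintype m] {A : Matrix l m ℝ}
    {B : Matrix m o ℝ} {a b : ℝ} (hb : 0 ≤ b)
    (hA₀ : ∀ i j, 0 ≤ A i j) (hB₀ : ∀ i j, 0 ≤ B i j) (hA : ∀ i j, 0 < A i j → a ≤ A i j)
    (hB : ∀ i j, 0 < B i j → b ≤ B i j) {i : l} {j : o} (hij : 0 < (A * B) i j) :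
    a * b ≤ (A * B) i j := by
  have hterm : ∀ s ∈ Finset.univ, 0 ≤ A i s * B s j := fun s _ =>
    mul_nonneg (hA₀ i s) (hB₀ s j)
  rw [mul_apply] at hij ⊢
  obtain ⟨s, -, hs⟩ := (Finset.sum_pos_iff_of_nonneg hterm).1 hij
  have hAs : 0 < A i s := (hA₀ i s).lt_of_ne' (left_ne_zero_of_mul hs.ne')
  have hBs : 0 < B s j := (hB₀ s j).lt_of_ne' (right_ne_zero_of_mul hs.ne')
  calc a * b ≤ A i s * B s j := mul_le_mul (hA i s hAs) (hB s j hBs) hb (hA₀ i s)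
    _ ≤ ∑ t, A i t * B t j := Finset.single_le_sum hterm (Finset.mem_univ s)

section Stochastic

variable {n : ℕ}

theorem isStochastic_one : IsStochastic (1 : Matrix (Fin n) (Fin n) ℝ) :=
  ⟨zero_le_one_elem, fun i => by simp [one_apply]⟩

theorem IsStochastic.mul {A B : Matrix (Fin n) (Fin n) ℝ} (hA : IsStochastic A)
    (hB : IsStochastic B) : IsStochastic (A * B) := by
  refine ⟨fun i j => ?_, fun i => ?_⟩ <;> simp only [mul_apply]
  · exact Finset.sum_nonneg fun s _ => mul_nonneg (hA.1 i s) (hB.1 s j)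
  · rw [Finset.sum_comm]
    simp [← Finset.mul_sum, hB.2, hA.2]

theorem isStochastic_backProd {W : ℕ → Matrix (Fin n) (Fin n) ℝ} (hW : ∀ k, IsStochastic (W k))
    (k : ℕ) : ∀ h, IsStochastic (backProd W k h)
  | 0 => isStochastic_one
  | h + 1 => (hW _).mul (isStochastic_backProd hW k h)

theorem backProd_apply_ge_pow {W : ℕ → Matrix (Fin n) (Fin n) ℝ} {α : ℝ} (hα : 0 ≤ α)
    (hW : ∀ k, IsStochastic (W k)) (hWα : ∀ k i j, 0 < W k i j → α ≤ W k i j) (k : ℕ) :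
    ∀ h i j, 0 < backProd W k h i j → α ^ h ≤ backProd W k h i j
  | 0, i, j, hij => by by_cases i = j <;> simp_all [backProd, one_apply]
  | h + 1, _, _, hij => by
    rw [pow_succ']
    exact mul_apply_ge_of_pos (pow_nonneg hα h) (hW _).1 (isStochastic_backProd hW k h).1
      (hWα _) (backProd_apply_ge_pow hα hW hWα k h) hij

theorem backProd_mulVec {W : ℕ → Matrix (Fin n) (Fin n) ℝ} {y : ℕ → Fin n → ℝ}
    (hy : ∀ k, y (k + 1) = W (k + 1) *ᵥ y k) (k : ℕ) :
    ∀ h, y (k + h) = backProd W k h *ᵥ y k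
  | 0 => by simp [backProd]
  | h + 1 => by rw [← add_assoc, hy, backProd_mulVec hy k h, backProd, mulVec_mulVec]

end Stochastic

section Spread

variable {n : ℕ}

theorem sub_le_spread (x : Fin n → ℝ) (i j : Fin n) : x i - x j ≤ spread x :=
  sub_le_sub (le_ciSup (Finite.bddAbove_range x) i) (ciInf_le (Finite.bddBelow_range x) j)

theorem spread_nonneg [NeZero n] (x : Fin n → ℝ) : 0 ≤ spread x := by
  simpa using sub_le_spread x 0 0

theorem spread_le_of_forall_sub_le [NeZero n] {x : Fin n → ℝ} {c : ℝ}
    (h : ∀ i j, x i - x j ≤ c) : spread x ≤ c := by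
  obtain ⟨j, hj⟩ := Finite.exists_min x
  have hsup : ⨆ i, x i ≤ c + x j := ciSup_le fun i => by linarith [h i j]
  have hinf : x j ≤ ⨅ i, x i := le_ciInf hj
  unfold spread
  linarith

theorem IsStochastic.mulVec_sub_mulVec_le {A : Matrix (Fin n) (Fin n) ℝ} (hA : IsStochastic A)
    (x : Fin n → ℝ) (i j : Fin n) :
    (A *ᵥ x) i - (A *ᵥ x) j ≤ (1 - ∑ s, min (A i s) (A j s)) * spread x := by
  set c := ∑ s, min (A i s) (A j s)
  have hexcess : ∀ r, ∑ s, (A r s - min (A i s) (A j s)) = 1 - c := fun r => by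
    rw [Finset.sum_sub_distrib, hA.2 r]
  have hi : ∑ s, (A i s - min (A i s) (A j s)) * x s ≤ (1 - c) * ⨆ s, x s := by
    rw [← hexcess i, Finset.sum_mul]
    exact Finset.sum_le_sum fun s _ => mul_le_mul_of_nonneg_left
      (le_ciSup (Finite.bddAbove_range x) s) (sub_nonneg.2 (min_le_left _ _))
  have hj : (1 - c) * ⨅ s, x s ≤ ∑ s, (A j s - min (A i s) (A j s)) * x s := by
    rw [← hexcess j, Finset.sum_mul]
    exact Finset.sum_le_sum fun s _ => mul_le_mul_of_nonneg_left
      (ciInf_le (Finite.bddBelow_range x) s) (sub_nonneg.2 (min_le_right _ _))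
  have hdiff : (A *ᵥ x) i - (A *ᵥ x) j = ∑ s, (A i s - min (A i s) (A j s)) * x s
      - ∑ s, (A j s - min (A i s) (A j s)) * x s := by
    simp only [mulVec, dotProduct, sub_mul, Finset.sum_sub_distrib]
    ring
  rw [hdiff, spread, mul_sub]
  linarith

theorem one_sub_sum_min_le_tau (A : Matrix (Fin n) (Fin n) ℝ) (i j : Fin n) :
    1 - ∑ s, min (A i s) (A j s) ≤ tau A :=
  sub_le_sub_left (ciInf_le (Finite.bddBelow_range
    fun p : Fin n × Fin n => ∑ s, min (A p.1 s) (A p.2 s)) (i, j)) 1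

theorem spread_mulVec_le_tau_mul [NeZero n] {A : Matrix (Fin n) (Fin n) ℝ}
    (hA : IsStochastic A) (x : Fin n → ℝ) : spread (A *ᵥ x) ≤ tau A * spread x :=
  spread_le_of_forall_sub_le fun i j => (hA.mulVec_sub_mulVec_le x i j).trans
    (mul_le_mul_of_nonneg_right (one_sub_sum_min_le_tau A i j) (spread_nonneg x))

theorem tau_le_one {A : Matrix (Fin n) (Fin n) ℝ} (hA : ∀ i j, 0 ≤ A i j) : tau A ≤ 1 :=
  sub_le_self _ <| Real.iInf_nonneg fun _ => Finset.sum_nonneg fun _ _ => le_min (hA _ _) (hA _ _)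

theorem tau_le_one_sub_of_scrambling [NeZero n] {A : Matrix (Fin n) (Fin n) ℝ} {β : ℝ}
    (hA₀ : ∀ i j, 0 ≤ A i j) (hA : Scrambling A) (hβ : ∀ i j, 0 < A i j → β ≤ A i j) :
    tau A ≤ 1 - β := by
  refine sub_le_sub_left (le_ciInf fun ⟨i, j⟩ => ?_) 1
  obtain ⟨s, hi, hj⟩ := hA i j
  exact (le_min (hβ _ _ hi) (hβ _ _ hj)).trans
    (Finset.single_le_sum (fun t _ => le_min (hA₀ i t) (hA₀ j t)) (Finset.mem_univ s))

theorem spread_backProd_mulVec_le [NeZero n] {W : ℕ → Matrix (Fin n) (Fin n) ℝ} {α : ℝ}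
    (hα : 0 ≤ α) (hW : ∀ k, IsStochastic (W k)) (hWα : ∀ k i j, 0 < W k i j → α ≤ W k i j)
    (k h : ℕ) (x : Fin n → ℝ) :
    spread (backProd W k h *ᵥ x) ≤
      spread x - α ^ h * (spread x * {B | Scrambling B}.indicator 1 (backProd W k h)) := by
  have hB := isStochastic_backProd hW k h
  refine (spread_mulVec_le_tau_mul hB x).trans ?_
  by_cases hscr : Scrambling (backProd W k h)
  · have := tau_le_one_sub_of_scrambling hB.1 hscr (backProd_apply_ge_pow hα hW hWα k h)
    rw [Set.indicator_of_mem (by exact hscr), Pi.one_apply]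
    nlinarith [spread_nonneg x]
  · rw [Set.indicator_of_notMem (by exact hscr)]
    nlinarith [spread_nonneg x, tau_le_one hB.1]

end Spread

section CondExp

variable {Ω : Type*} {m m0 : MeasurableSpace Ω} {μ : Measure Ω}

theorem integrable_of_const_le_condExp [NeZero μ] {f : Ω → ℝ} {p : ℝ} (hp : 0 < p)
    (hf : (fun _ => p) ≤ᵐ[μ] μ[f|m]) : Integrable f μ := by
  by_contra hf_int
  rw [condExp_of_not_integrable hf_int] at hf
  obtain ⟨ω, hω⟩ := hf.exists
  exact hp.not_ge hω

theorem condExp_le_sub_smul_mul_condExp (hm : m ≤ m0) [SigmaFinite (μ.trim hm)]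
    {Y f Z : Ω → ℝ} {c : ℝ} (hY : StronglyMeasurable[m] Y) (hY_int : Integrable Y μ)
    (hf : Integrable f μ) (hYf : Integrable (Y * f) μ) (hZ : Integrable Z μ)
    (hZY : Z ≤ Y - c • (Y * f)) : μ[Z|m] ≤ᵐ[μ] Y - c • (Y * μ[f|m]) := by
  have hlin : μ[Y - c • (Y * f)|m] =ᵐ[μ] Y - c • (Y * μ[f|m]) := by
    filter_upwards [condExp_sub hY_int (hYf.smul c) m, condExp_smul c (Y * f) m,
      condExp_mul_of_stronglyMeasurable_left hY hYf hf] with ω hsub hsmul hmul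
    rw [hsub, Pi.sub_apply, condExp_of_stronglyMeasurable hm hY hY_int, hsmul]
    simp only [Pi.smul_apply, Pi.sub_apply, hmul]
  exact (condExp_mono hZ (hY_int.sub (hYf.smul c)) (ae_of_all _ hZY)).trans_eq hlin

end CondExp

theorem finite_step_contraction_in_expectation_general {n : ℕ} (hn : 0 < n)
    {Ω : Type*} {m0 : MeasurableSpace Ω} {μ : Measure Ω} [IsProbabilityMeasure μ]
    (ℱ : Filtration ℕ m0) (W : ℕ → Ω → Matrix (Fin n) (Fin n) ℝ)
    (h : ℕ) (p : ℝ) (hp0 : 0 < p)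
    (α : ℝ) (hα0 : 0 < α)
    (hstoch : ∀ k ω, IsStochastic (W k ω))
    (hbdd : ∀ k ω i j, 0 < W k ω i j → α ≤ W k ω i j)
    (x : ℕ → Ω → Fin n → ℝ)
    (hrec : ∀ k ω, x (k + 1) ω = (W (k + 1) ω).mulVec (x k ω))
    (hadp : ∀ k, StronglyMeasurable[ℱ k] fun ω => spread (x k ω))
    (hint : ∀ k, Integrable (fun ω => spread (x k ω)) μ)
    (hscr : ∀ k, (fun _ : Ω => p) ≤ᵐ[μ]
      μ[Set.indicator {ω | Scrambling (backProd (fun i => W i ω) k h)}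
          (fun _ => (1 : ℝ))|ℱ k]) :
    ∀ k, μ[fun ω => spread (x (k + h) ω)|ℱ k] ≤ᵐ[μ]
      fun ω => (1 - p * α ^ h) * spread (x k ω) := by
  have : NeZero n := .of_pos hn
  intro k
  set f := Set.indicator {ω | Scrambling (backProd (fun i => W i ω) k h)} fun _ => (1 : ℝ)
  set v := fun ω => spread (x k ω)
  have hf : Integrable f μ := integrable_of_const_le_condExp hp0 (hscr k)
  have hvf : Integrable (v * f) μ := (hint k).mul_bdd hf.1 (ae_of_all _ fun ω =>
    (norm_indicator_le_norm_self _ ω).trans_eq norm_one)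
  have hcontract : (fun ω => spread (x (k + h) ω)) ≤ v - α ^ h • (v * f) := fun ω => by
    show spread (x (k + h) ω) ≤ v ω - α ^ h * (v ω * f ω)
    rw [backProd_mulVec (W := (W · ω)) (y := (x · ω)) (hrec · ω) k h]
    exact spread_backProd_mulVec_le hα0.le (hstoch · ω) (hbdd · ω) k h (x k ω)
  filter_upwards [condExp_le_sub_smul_mul_condExp (ℱ.le k) (hadp k) (hint k) hf hvf
    (hint (k + h)) hcontract, hscr k] with ω hle hp
  have hvp := mul_le_mul_of_nonneg_left hp
    (mul_nonneg (pow_nonneg hα0.le h) (spread_nonneg (x k ω)))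
  simp only [Pi.sub_apply, Pi.smul_apply, Pi.mul_apply, smul_eq_mul] at hle
  linarith

theorem finite_step_contraction_in_expectation {n : ℕ} (hn : 0 < n)
    {Ω : Type*} {m0 : MeasurableSpace Ω} {μ : Measure Ω} [IsProbabilityMeasure μ]
    (ℱ : Filtration ℕ m0) (W : ℕ → Ω → Matrix (Fin n) (Fin n) ℝ)
    (h : ℕ) (hh : 1 ≤ h) (p : ℝ) (hp0 : 0 < p) (hp1 : p ≤ 1)
    (α : ℝ) (hα0 : 0 < α) (hα1 : α ≤ 1)
    (hstoch : ∀ k ω, IsStochastic (W k ω))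
    (hbdd : ∀ k ω i j, 0 < W k ω i j → α ≤ W k ω i j)
    (x : ℕ → Ω → Fin n → ℝ) (x0 : Fin n → ℝ) (hx0 : ∀ ω, x 0 ω = x0)
    (hrec : ∀ k ω, x (k + 1) ω = (W (k + 1) ω).mulVec (x k ω))
    (hadp : ∀ k, StronglyMeasurable[ℱ k] fun ω => spread (x k ω))
    (hint : ∀ k, Integrable (fun ω => spread (x k ω)) μ)
    (hscr : ∀ k, (fun _ : Ω => p) ≤ᵐ[μ]
      μ[Set.indicator {ω | Scrambling (backProd (fun i => W i ω) k h)}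
          (fun _ => (1 : ℝ))|ℱ k]) :
    ∀ k, μ[fun ω => spread (x (k + h) ω)|ℱ k] ≤ᵐ[μ]
      fun ω => (1 - p * α ^ h) * spread (x k ω) :=
  finite_step_contraction_in_expectation_general hn ℱ W h p hp0 α hα0 hstoch hbdd x hrec hadp hint
    hscr
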